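/- Let x ∈ [0,1) be continued-fraction normal. Then for every n ≥ 0, T^n x is continued-fraction normal (T the Gauss map), and for every finite string s = [c₀; c₁, …, c_k] with c₀ ∈ ℤ and c_i ∈ ℕ, the number s.x = ⟨c₀; c₁, …, c_k + x⟩ is continued-fraction normal. -/

import Mathlib

open MeasureTheory Filter

/-- The Gauss map `T(x) = 1/x - ⌊1/x⌋` (with `T 0 = 0`). -/
noncomputable def gauss (x : ℝ) : ℝ := if x = 0 then 0 else x⁻¹ - ⌊x⁻¹⌋

/-- `cfDigit x i` is the continued fraction partial quotient `a_{i+1}(x)`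
of `x ∈ [0,1)`, namely `⌊1 / T^i x⌋`. -/
noncomputable def cfDigit (x : ℝ) (i : ℕ) : ℤ := ⌊(gauss^[i] x)⁻¹⌋

/-- The continued fraction cylinder set of the string `s = [c₁,…,c_n]`. -/
def cyl (s : List ℤ) : Set ℝ :=
  {x | x ∈ Set.Ico (0 : ℝ) 1 ∧ ∀ i < s.length, cfDigit x i = s.getD i 0}

/-- The Gauss measure `μ(A) = ∫_A dx / ((log 2)(1+x))` on `[0,1)`. -/
noncomputable def gaussMeasure : Measure ℝ :=
  (volume.restrict (Set.Ico (0 : ℝ) 1)).withDensity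
    (fun x => ENNReal.ofReal (1 / (Real.log 2 * (1 + x))))

open scoped Classical in
/-- The number of `i < n` with `T^i x` in the cylinder of `s`. -/
noncomputable def cfCount (x : ℝ) (s : List ℤ) (n : ℕ) : ℕ :=
  ((Finset.range n).filter (fun i => gauss^[i] x ∈ cyl s)).card

/-- `x ∈ [0,1)` is CF-normal: every finite string of positive integers occurs in the
continued fraction expansion of `x` with limiting frequency equal to the Gauss
measure of its cylinder set. -/
noncomputable def cfNormal (x : ℝ) : Prop :=
  x ∈ Set.Ico (0 : ℝ) 1 ∧
  ∀ s : List ℤ, s ≠ [] → (∀ c ∈ s, 0 < c) →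
    Tendsto (fun n : ℕ => (cfCount x s n : ℝ) / n) atTop
      (nhds (gaussMeasure (cyl s)).toReal)

/-- A real number `y` is CF-normal if its fractional part is CF-normal. -/
noncomputable def cfNormalReal (y : ℝ) : Prop := cfNormal (Int.fract y)

/-- The action of an integer matrix on a real number by a linear fractional
transformation. -/
noncomputable def mobius (M : Matrix (Fin 2) (Fin 2) ℤ) (x : ℝ) : ℝ :=
  ((M 0 0 : ℝ) * x + (M 0 1 : ℝ)) / ((M 1 0 : ℝ) * x + (M 1 1 : ℝ))

/-- The matrix `A_i = [[1,i],[0,1]]`. -/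
def matA (i : ℤ) : Matrix (Fin 2) (Fin 2) ℤ := !![1, i; 0, 1]

/-- The matrix `J = [[0,1],[1,0]]`. -/
def matJ : Matrix (Fin 2) (Fin 2) ℤ := !![0, 1; 1, 0]

/-! Visits of the Gauss orbit of `y` to a cylinder are counted additively along the orbit, so
the counts for `y` and for `T^k y` differ, after a time shift by `k`, by a bounded amount; hence
they have the same limiting frequencies and `y` is CF-normal iff `T^k y` is.
For the prepending part, the matrix product acts on `x ∈ [0,1)` as the
nested fraction `[0; c₁, …, c_k + x]` (all denominators stay positive), so `s.x` has fractional
part `z = [0; c₁, …, c_k + x]` with `T^k z = x`, and `z` is CF-normal because `x` is. -/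

lemma gauss_mem_Ico (x : ℝ) : gauss x ∈ Set.Ico (0 : ℝ) 1 := by
  unfold gauss
  split_ifs
  · simp
  · exact ⟨Int.fract_nonneg _, Int.fract_lt_one _⟩

lemma gauss_iterate_mem_Ico {x : ℝ} (hx : x ∈ Set.Ico (0 : ℝ) 1) (n : ℕ) :
    gauss^[n] x ∈ Set.Ico (0 : ℝ) 1 := by
  cases n with
  | zero => exact hx
  | succ n => rw [Function.iterate_succ_apply']; exact gauss_mem_Ico _

lemma cfCount_add (x : ℝ) (s : List ℤ) (n m : ℕ) :
    cfCount x s (n + m) = cfCount x s n + cfCount (gauss^[n] x) s m := by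
  simp only [cfCount, Finset.card_filter, Finset.sum_range_add]
  congr 1
  exact Finset.sum_congr rfl fun i _ => by rw [add_comm, Function.iterate_add_apply]

lemma tendsto_add_div_natCast_add {y : ℕ → ℝ} {L : ℝ} (c : ℝ) (p q : ℕ)
    (h : Tendsto (fun m : ℕ => y m / (m + p : ℝ)) atTop (nhds L)) :
    Tendsto (fun m : ℕ => (y m + c) / (m + q : ℝ)) atTop (nhds L) := by
  have hq : Tendsto (fun m : ℕ => (m + q : ℝ)) atTop atTop :=
    tendsto_atTop_add_const_right _ _ tendsto_natCast_atTop_atTop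
  have hratio : Tendsto (fun m : ℕ => 1 + ((p : ℝ) - q) / (m + q)) atTop (nhds 1) := by
    simpa using tendsto_const_nhds.add (tendsto_const_nhds.div_atTop hq)
  -- `(y m + c) / (m + q) = y m / (m + p) * (1 + (p - q) / (m + q)) + c / (m + q)`
  have hlim := (h.mul hratio).add (tendsto_const_nhds (x := c).div_atTop hq)
  rw [mul_one, add_zero] at hlim
  refine hlim.congr' ?_
  filter_upwards [eventually_ge_atTop 1] with m hm
  have hm : (1 : ℝ) ≤ m := by exact_mod_cast hm
  field_simp
  ring

lemma tendsto_div_natCast_iff_of_add_eq {a b : ℕ → ℝ} {C L : ℝ} (k : ℕ)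
    (h : ∀ m, a (m + k) = C + b m) :
    Tendsto (fun m : ℕ => a m / m) atTop (nhds L) ↔
      Tendsto (fun m : ℕ => b m / m) atTop (nhds L) := by
  rw [← tendsto_add_atTop_iff_nat k]
  constructor
  · intro ha
    refine (tendsto_add_div_natCast_add (y := fun m => a (m + k)) (-C) k 0
      (by simpa using ha)).congr fun m => ?_
    rw [h]
    simp
  · intro hb
    refine (tendsto_add_div_natCast_add (y := b) C 0 k (by simpa using hb)).congr fun m => ?_
    rw [h, add_comm C, Nat.cast_add]

lemma cfNormal_gauss_iterate_iff {y : ℝ} (hy : y ∈ Set.Ico (0 : ℝ) 1) (k : ℕ) :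
    cfNormal (gauss^[k] y) ↔ cfNormal y := by
  have hfreq (s : List ℤ) (L : ℝ) :
      Tendsto (fun m : ℕ => (cfCount (gauss^[k] y) s m : ℝ) / m) atTop (nhds L) ↔
        Tendsto (fun m : ℕ => (cfCount y s m : ℝ) / m) atTop (nhds L) :=
    (tendsto_div_natCast_iff_of_add_eq k fun m => by
      rw [add_comm, cfCount_add, Nat.cast_add]).symm
  simp only [cfNormal, hfreq, gauss_iterate_mem_Ico hy, hy, true_and]

/-- The continued fraction `[0; c₁, …, c_k + x]`. -/
noncomputable def cfPrepend : List ℤ → ℝ → ℝ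
  | [], x => x
  | d :: cs, x => ((d : ℝ) + cfPrepend cs x)⁻¹

lemma cfPrepend_mem_Icc {cs : List ℤ} (hcs : ∀ c ∈ cs, 0 < c) {x : ℝ}
    (hx : x ∈ Set.Icc (0 : ℝ) 1) : cfPrepend cs x ∈ Set.Icc (0 : ℝ) 1 := by
  induction cs with
  | nil => exact hx
  | cons d cs ih =>
    have hd : (1 : ℝ) ≤ d := by exact_mod_cast hcs d List.mem_cons_self
    obtain ⟨h0, -⟩ := ih fun c hc => hcs c (List.mem_cons_of_mem _ hc)
    exact ⟨by unfold cfPrepend; positivity, inv_le_one_of_one_le₀ (by linarith)⟩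

lemma gauss_fract_inv_add {d : ℤ} (hd : 0 < d) {w : ℝ} (hw : w ∈ Set.Icc (0 : ℝ) 1) :
    gauss (Int.fract ((d : ℝ) + w)⁻¹) = Int.fract w := by
  have hd : (1 : ℝ) ≤ d := by exact_mod_cast hd
  rcases (show (1 : ℝ) ≤ d + w by linarith [hw.1]).eq_or_lt with hone | hlt
  · have hw0 : w = 0 := by linarith [hw.1]
    have hd1 : (d : ℝ) = 1 := by linarith
    simp [hw0, hd1, gauss]
  · have hpos : (0 : ℝ) < (d + w)⁻¹ := inv_pos.2 (by linarith)
    rw [Int.fract_eq_self.2 ⟨hpos.le, inv_lt_one_of_one_lt₀ hlt⟩, gauss, if_neg hpos.ne',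
      inv_inv, ← Int.fract, Int.fract_intCast_add]

lemma gauss_iterate_fract_cfPrepend {cs : List ℤ} (hcs : ∀ c ∈ cs, 0 < c) {x : ℝ}
    (hx : x ∈ Set.Ico (0 : ℝ) 1) : gauss^[cs.length] (Int.fract (cfPrepend cs x)) = x := by
  induction cs with
  | nil => exact Int.fract_eq_self.2 hx
  | cons d cs ih =>
    have hcs' : ∀ c ∈ cs, 0 < c := fun c hc => hcs c (List.mem_cons_of_mem _ hc)
    rw [List.length_cons, Function.iterate_succ_apply, cfPrepend,
      gauss_fract_inv_add (hcs d List.mem_cons_self)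
        (cfPrepend_mem_Icc hcs' (Set.Ico_subset_Icc_self hx)), ih hcs']

noncomputable def mobiusDenom (M : Matrix (Fin 2) (Fin 2) ℤ) (x : ℝ) : ℝ :=
  (M 1 0 : ℝ) * x + (M 1 1 : ℝ)

section Mobius

variable {M N : Matrix (Fin 2) (Fin 2) ℤ} {x : ℝ}

lemma mobiusDenom_mul (hN : mobiusDenom N x ≠ 0) :
    mobiusDenom (M * N) x = mobiusDenom N x * mobiusDenom M (mobius N x) := by
  simp only [mobiusDenom, mobius, Matrix.mul_apply, Fin.sum_univ_two] at hN ⊢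
  push_cast
  field_simp
  ring

lemma mobius_mul (hN : mobiusDenom N x ≠ 0) :
    mobius (M * N) x = mobius M (mobius N x) := by
  have hnum : ((M * N) 0 0 : ℝ) * x + ((M * N) 0 1 : ℝ) =
      mobiusDenom N x * ((M 0 0 : ℝ) * mobius N x + (M 0 1 : ℝ)) := by
    simp only [mobiusDenom, mobius, Matrix.mul_apply, Fin.sum_univ_two] at hN ⊢
    push_cast
    field_simp
    ring
  rw [mobius, hnum, ← mobiusDenom, mobiusDenom_mul hN, mul_div_mul_left _ _ hN]
  rfl

end Mobius

lemma mobius_matA (c : ℤ) (y : ℝ) : mobius (matA c) y = y + c := by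
  simp [mobius, matA]

lemma mobiusDenom_matJ_mul_matA (d : ℤ) (y : ℝ) : mobiusDenom (matJ * matA d) y = d + y := by
  simp [mobiusDenom, matJ, matA, Matrix.mul_apply, Fin.sum_univ_two, add_comm]

lemma mobius_matJ_mul_matA (d : ℤ) (y : ℝ) : mobius (matJ * matA d) y = ((d : ℝ) + y)⁻¹ := by
  simp [mobius, matJ, matA, Matrix.mul_apply, Fin.sum_univ_two, add_comm]

lemma mobius_prod_matJ_mul_matA {cs : List ℤ} (hcs : ∀ c ∈ cs, 0 < c) {x : ℝ}
    (hx : x ∈ Set.Icc (0 : ℝ) 1) :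
    0 < mobiusDenom (cs.map (fun d => matJ * matA d)).prod x ∧
      mobius (cs.map (fun d => matJ * matA d)).prod x = cfPrepend cs x := by
  induction cs with
  | nil => simp [mobiusDenom, mobius, cfPrepend]
  | cons d cs ih =>
    have hcs' : ∀ c ∈ cs, 0 < c := fun c hc => hcs c (List.mem_cons_of_mem _ hc)
    obtain ⟨hden, hval⟩ := ih hcs'
    have hd : (1 : ℝ) ≤ d := by exact_mod_cast hcs d List.mem_cons_self
    have hdw : 0 < (d : ℝ) + cfPrepend cs x := by
      linarith [(cfPrepend_mem_Icc hcs' hx).1]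
    rw [List.map_cons, List.prod_cons, mobiusDenom_mul hden.ne', mobius_mul hden.ne', hval,
      mobiusDenom_matJ_mul_matA, mobius_matJ_mul_matA, cfPrepend]
    exact ⟨mul_pos hden hdw, rfl⟩

/-- Shifting by the Gauss map and prepending a finite string of partial quotients
both preserve CF-normality: if `x ∈ [0,1)` is CF-normal then so is `T^n x` for all
`n`, and so is `s.x = ⟨c₀; c₁, …, c_k + x⟩` for any string `s = [c₀; c₁, …, c_k]`
with `c₀ ∈ ℤ` and `c₁,…,c_k ≥ 1`. -/
theorem cfNormal_shift_and_prepend (x : ℝ) (hx : cfNormal x) :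
    (∀ n : ℕ, cfNormal (gauss^[n] x)) ∧
    (∀ (c₀ : ℤ) (cs : List ℤ), (∀ c ∈ cs, 0 < c) →
      cfNormalReal (mobius (matA c₀ * (cs.map (fun d => matJ * matA d)).prod) x)) := by
  refine ⟨fun n => (cfNormal_gauss_iterate_iff hx.1 n).2 hx, fun c₀ cs hcs => ?_⟩
  obtain ⟨hden, hval⟩ := mobius_prod_matJ_mul_matA hcs (Set.Ico_subset_Icc_self hx.1)
  rw [cfNormalReal, mobius_mul hden.ne', hval, mobius_matA, Int.fract_add_intCast,
    ← cfNormal_gauss_iterate_iff ⟨Int.fract_nonneg _, Int.fract_lt_one _⟩ cs.length,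
    gauss_iterate_fract_cfPrepend hcs hx.1]
  exact hx
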